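/- Let U ⊆ ℝ^m be an open set and φ = (φ^1, …, φ^n) : U → ℝ^n a smooth map. Assume: (a) φ is horizontally weakly conformal; (b) Δ(Δφ^α) = 0 on U for every α; and (c) for all 1 ≤ α ≠ β ≤ n the functions φ^α·φ^β and (φ^α)² − (φ^β)² are biharmonic on U. Then φ is a generalized harmonic morphism: for every open set V ⊆ ℝ^n and every harmonic function f : V → ℝ, the composition f ∘ φ is biharmonic on φ^{-1}(V). -/

import Mathlib

open scoped BigOperators RealInnerProductSpace

noncomputable section

/-- `m`-dimensional Euclidean space. -/
abbrev E (m : ℕ) := EuclideanSpace ℝ (Fin m)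

/-- The Euclidean Laplacian of a real-valued function: the sum of the second
partial derivatives in the coordinate directions. -/
noncomputable def lap {m : ℕ} (f : E m → ℝ) (x : E m) : ℝ :=
  ∑ i : Fin m,
    fderiv ℝ (fun y => fderiv ℝ f y (EuclideanSpace.single i 1)) x (EuclideanSpace.single i 1)

/-- The Euclidean Laplacian of a complex-valued function (applied componentwise). -/
noncomputable def lapC {m : ℕ} (f : E m → ℂ) (x : E m) : ℂ :=
  ∑ i : Fin m,
    fderiv ℝ (fun y => fderiv ℝ f y (EuclideanSpace.single i 1)) x (EuclideanSpace.single i 1)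

/-- A (smooth) harmonic function on a set: `Δ f = 0` there. -/
def HarmonicOn {m : ℕ} (f : E m → ℝ) (s : Set (E m)) : Prop :=
  ContDiffOn ℝ (⊤ : ℕ∞) f s ∧ ∀ x ∈ s, lap f x = 0

/-- A (smooth) biharmonic function on a set: `Δ (Δ f) = 0` there. -/
def BiharmonicOn {m : ℕ} (f : E m → ℝ) (s : Set (E m)) : Prop :=
  ContDiffOn ℝ (⊤ : ℕ∞) f s ∧ ∀ x ∈ s, lap (lap f) x = 0

/-- A generalized harmonic morphism on `U`: it pulls back every harmonic function on an
open set `V` of the target to a biharmonic function on `U ∩ φ ⁻¹' V`. -/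
def IsGHM {m n : ℕ} (φ : E m → E n) (U : Set (E m)) : Prop :=
  ∀ V : Set (E n), IsOpen V → ∀ f : E n → ℝ, HarmonicOn f V →
    BiharmonicOn (f ∘ φ) (U ∩ φ ⁻¹' V)

/-- A harmonic morphism on `U`: it pulls back harmonic functions to harmonic functions. -/
def IsHM {m n : ℕ} (φ : E m → E n) (U : Set (E m)) : Prop :=
  ∀ V : Set (E n), IsOpen V → ∀ f : E n → ℝ, HarmonicOn f V →
    HarmonicOn (f ∘ φ) (U ∩ φ ⁻¹' V)

/-- A biharmonic morphism on `U`: it pulls back biharmonic functions to biharmonic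
functions. -/
def IsBHM {m n : ℕ} (φ : E m → E n) (U : Set (E m)) : Prop :=
  ∀ V : Set (E n), IsOpen V → ∀ f : E n → ℝ, BiharmonicOn f V →
    BiharmonicOn (f ∘ φ) (U ∩ φ ⁻¹' V)

/-- Horizontally weakly conformal on `U`: there is `λ : U → [0,∞)` with
`⟪∇φ^α, ∇φ^β⟫ = λ² δ_{αβ}` pointwise on `U`. -/
def IsHWC {m n : ℕ} (φ : E m → E n) (U : Set (E m)) : Prop :=
  ∃ lam : E m → ℝ, (∀ x, 0 ≤ lam x) ∧
    ∀ x ∈ U, ∀ α β : Fin n,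
      ⟪gradient (fun y => φ y α) x, gradient (fun y => φ y β) x⟫ =
        (lam x) ^ 2 * (if α = β then 1 else 0)

namespace Aux
variable {m n : ℕ}
noncomputable def e {m : ℕ} (i : Fin m) : E m := EuclideanSpace.single i 1
noncomputable def pd {F : Type*} [NormedAddCommGroup F] [NormedSpace ℝ F]
    (i : Fin m) (f : E m → F) (x : E m) : F := fderiv ℝ f x (e i)

theorem lap_eq (f : E m → ℝ) (x : E m) : lap f x = ∑ i, pd i (pd i f) x := rfl

theorem pd_congr_nhds {F : Type*} [NormedAddCommGroup F] [NormedSpace ℝ F]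
    {f g : E m → F} {x : E m} (h : f =ᶠ[nhds x] g) (i : Fin m) :
    pd i f =ᶠ[nhds x] pd i g := by
  filter_upwards [h.fderiv (𝕜 := ℝ)] with y hy
  simp only [pd, hy]

theorem pd_congr {F : Type*} [NormedAddCommGroup F] [NormedSpace ℝ F]
    {f g : E m → F} {x : E m} (h : f =ᶠ[nhds x] g) (i : Fin m) :
    pd i f x = pd i g x := (pd_congr_nhds h i).self_of_nhds

theorem lap_congr {f g : E m → ℝ} {x : E m} (h : f =ᶠ[nhds x] g) :
    lap f x = lap g x := by
  rw [lap_eq, lap_eq]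
  exact Finset.sum_congr rfl fun i _ => pd_congr (pd_congr_nhds h i) i


theorem eventuallyEq_of_open {F : Type*} {f g : E m → F} {s : Set (E m)} (hs : IsOpen s)
    {x : E m} (hx : x ∈ s) (h : ∀ y ∈ s, f y = g y) : f =ᶠ[nhds x] g :=
  Filter.eventuallyEq_of_mem (hs.mem_nhds hx) h

theorem ContDiffOn.pd' {F : Type*} [NormedAddCommGroup F] [NormedSpace ℝ F]
    {f : E m → F} {s : Set (E m)} (hf : ContDiffOn ℝ (⊤ : ℕ∞) f s) (hs : IsOpen s) (i : Fin m) :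
    ContDiffOn ℝ (⊤ : ℕ∞) (pd i f) s :=
  (hf.fderiv_of_isOpen hs (by simp)).clm_apply contDiffOn_const

theorem diffAt {k : ℕ} {F : Type*} [NormedAddCommGroup F] [NormedSpace ℝ F]
    {f : E k → F} {s : Set (E k)} (hf : ContDiffOn ℝ (⊤ : ℕ∞) f s) (hs : IsOpen s)
    {x : E k} (hx : x ∈ s) : DifferentiableAt ℝ f x :=
  (hf.contDiffAt (hs.mem_nhds hx)).differentiableAt (by simp)

theorem clm_decompF {F : Type*} [NormedAddCommGroup F] [NormedSpace ℝ F]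
    (L : E n →L[ℝ] F) (v : E n) : L v = ∑ α, v α • L (e α) := by
  have hv : v = ∑ α, v α • e α := by
    ext β
    rw [WithLp.ofLp_sum, Finset.sum_apply]
    simp [e, EuclideanSpace.single_apply]
  conv_lhs => rw [hv]
  rw [map_sum]
  simp

theorem clm_decomp (L : E n →L[ℝ] ℝ) (v : E n) : L v = ∑ α, v α * L (e α) :=
  clm_decompF L v

theorem gradient_coord (f : E m → ℝ) (x : E m) (i : Fin m) :
    gradient f x i = pd i f x := by
  have h1 : ⟪gradient f x, e i⟫ = fderiv ℝ f x (e i) := by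
    rw [gradient]
    exact InnerProductSpace.toDual_symm_apply
  rw [real_inner_comm] at h1
  rw [e, EuclideanSpace.inner_single_left] at h1
  simpa [pd, e] using h1

theorem inner_gradient (f g : E m → ℝ) (x : E m) :
    ⟪gradient f x, gradient g x⟫ = ∑ i, pd i f x * pd i g x := by
  rw [PiLp.inner_apply]
  simp [gradient_coord]
  exact Finset.sum_congr rfl fun _ _ => mul_comm _ _

theorem pd_mul {u v : E m → ℝ} {x : E m} (hu : DifferentiableAt ℝ u x)
    (hv : DifferentiableAt ℝ v x) (i : Fin m) :
    pd i (fun y => u y * v y) x = pd i u x * v x + u x * pd i v x := by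
  unfold pd
  rw [fderiv_fun_mul hu hv]
  simp [smul_eq_mul]
  ring

theorem pd_sum {ι : Type*} (s : Finset ι) {F : ι → E m → ℝ} {x : E m}
    (h : ∀ a ∈ s, DifferentiableAt ℝ (F a) x) (i : Fin m) :
    pd i (fun y => ∑ a ∈ s, F a y) x = ∑ a ∈ s, pd i (F a) x := by
  unfold pd
  rw [fderiv_fun_sum h]
  simp

theorem pd_coord {φ : E m → E n} {x : E m} (hφ : DifferentiableAt ℝ φ x) (i : Fin m) (α : Fin n) :
    pd i (fun y => φ y α) x = (fderiv ℝ φ x (e i)) α := by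
  have h : (fun y => φ y α) = (⇑(EuclideanSpace.proj α (𝕜 := ℝ)) ∘ φ) := rfl
  rw [h]
  unfold pd
  rw [fderiv_comp x (EuclideanSpace.proj α).differentiableAt hφ]
  rw [ContinuousLinearMap.fderiv]
  rfl

theorem pd_flip {g : E n → ℝ} {z : E n} (hg : DifferentiableAt ℝ (fderiv ℝ g) z)
    (a b : Fin n) :
    pd b (pd a g) z = fderiv ℝ (fderiv ℝ g) z (e b) (e a) := by
  unfold pd
  rw [fderiv_clm_apply hg (differentiableAt_const _)]
  simp

theorem pd_symm {g : E n → ℝ} {z : E n} (hg : ContDiffAt ℝ (⊤ : ℕ∞) g z) (a b : Fin n) :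
    pd b (pd a g) z = pd a (pd b g) z := by
  have hd : DifferentiableAt ℝ (fderiv ℝ g) z :=
    (hg.fderiv_right (m := 1) (WithTop.coe_le_coe.mpr le_top)).differentiableAt one_ne_zero
  rw [pd_flip hd, pd_flip hd]
  exact (hg.isSymmSndFDerivAt (by rw [minSmoothness_of_isRCLikeNormedField]; exact WithTop.coe_le_coe.mpr le_top)).eq _ _

theorem pd_comp {s : Set (E m)} (hs : IsOpen s) {t : Set (E n)} (ht : IsOpen t)
    {φ : E m → E n} (hφ : ContDiffOn ℝ (⊤ : ℕ∞) φ s) (hst : Set.MapsTo φ s t)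
    {g : E n → ℝ} (hg : ContDiffOn ℝ (⊤ : ℕ∞) g t) {x : E m} (hx : x ∈ s) (i : Fin m) :
    pd i (fun y => g (φ y)) x = ∑ α, pd α g (φ x) * pd i (fun y => φ y α) x := by
  have hφx : DifferentiableAt ℝ φ x := diffAt hφ hs hx
  have hgx : DifferentiableAt ℝ g (φ x) := diffAt hg ht (hst hx)
  have key : fderiv ℝ (g ∘ φ) x (e i) = ∑ α, pd α g (φ x) * pd i (fun y => φ y α) x := by
    rw [fderiv_comp x hgx hφx]
    simp only [ContinuousLinearMap.coe_comp', Function.comp_apply]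
    rw [clm_decomp]
    refine Finset.sum_congr rfl fun α _ => ?_
    rw [pd_coord hφx i α]
    exact mul_comm _ _
  exact key

theorem pd_pd_comp {s : Set (E m)} (hs : IsOpen s) {t : Set (E n)} (ht : IsOpen t)
    {φ : E m → E n} (hφ : ContDiffOn ℝ (⊤ : ℕ∞) φ s) (hst : Set.MapsTo φ s t)
    {g : E n → ℝ} (hg : ContDiffOn ℝ (⊤ : ℕ∞) g t) {x : E m} (hx : x ∈ s) (i : Fin m) :
    pd i (pd i (fun y => g (φ y))) x =
      (∑ α, pd α g (φ x) * pd i (pd i (fun y => φ y α)) x) +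
      ∑ β, ∑ α, pd β (pd α g) (φ x) *
        (pd i (fun y => φ y β) x * pd i (fun y => φ y α) x) := by
  classical
  have hφx : DifferentiableAt ℝ φ x := diffAt hφ hs hx
  have hDφ : ContDiffOn ℝ (⊤ : ℕ∞) (fderiv ℝ φ) s := hφ.fderiv_of_isOpen hs (by simp)
  have hDg : ContDiffOn ℝ (⊤ : ℕ∞) (fderiv ℝ g) t := hg.fderiv_of_isOpen ht (by simp)
  set c : E m → (E n →L[ℝ] ℝ) := fun y => fderiv ℝ g (φ y) with hc_def
  set u : E m → E n := fun y => fderiv ℝ φ y (e i) with hu_def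
  have hev : pd i (fun y => g (φ y)) =ᶠ[nhds x] fun y => c y (u y) := by
    filter_upwards [hs.mem_nhds hx] with y hy
    have hφy : DifferentiableAt ℝ φ y := diffAt hφ hs hy
    have hgy : DifferentiableAt ℝ g (φ y) := diffAt hg ht (hst hy)
    have h : (fun y => g (φ y)) = g ∘ φ := rfl
    rw [h]
    unfold pd
    rw [fderiv_comp y hgy hφy]
    simp [hc_def, hu_def]
  have hcx : DifferentiableAt ℝ c x :=
    (diffAt hDg ht (hst hx)).comp x hφx
  have hux : DifferentiableAt ℝ u x :=
    (diffAt hDφ hs hx).clm_apply (differentiableAt_const _)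
  have step1 : pd i (pd i (fun y => g (φ y))) x = pd i (fun y => c y (u y)) x :=
    pd_congr hev i
  have step2 : pd i (fun y => c y (u y)) x
      = c x (fderiv ℝ u x (e i)) + fderiv ℝ c x (e i) (u x) := by
    unfold pd
    rw [fderiv_clm_apply hcx hux]
    simp
  have term1 : c x (fderiv ℝ u x (e i))
      = ∑ α, pd α g (φ x) * pd i (pd i (fun y => φ y α)) x := by
    rw [clm_decomp]
    refine Finset.sum_congr rfl fun α _ => ?_
    have hz : (fderiv ℝ u x (e i)) α = pd i (fun y => u y α) x := (pd_coord hux i α).symm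
    have h2 : pd i (fun y => u y α) x = pd i (pd i (fun y => φ y α)) x := by
      refine pd_congr ?_ i
      filter_upwards [hs.mem_nhds hx] with y hy
      exact (pd_coord (diffAt hφ hs hy) i α).symm
    rw [hz, h2, mul_comm]
    rfl
  have hDgx : DifferentiableAt ℝ (fderiv ℝ g) (φ x) := diffAt hDg ht (hst hx)
  have term2 : fderiv ℝ c x (e i) (u x)
      = ∑ β, ∑ α, pd β (pd α g) (φ x) *
          (pd i (fun y => φ y β) x * pd i (fun y => φ y α) x) := by
    have hfc : fderiv ℝ c x = (fderiv ℝ (fderiv ℝ g) (φ x)).comp (fderiv ℝ φ x) := by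
      have h : c = (fderiv ℝ g) ∘ φ := rfl
      rw [h]
      exact fderiv_comp x hDgx hφx
    rw [hfc]
    simp only [ContinuousLinearMap.coe_comp', Function.comp_apply]
    set B := fderiv ℝ (fderiv ℝ g) (φ x) with hB
    set w : E n := fderiv ℝ φ x (e i) with hw
    have hux' : u x = w := rfl
    rw [hux']
    have h1 : B w = ∑ β, w β • B (e β) := clm_decompF B w
    rw [h1]
    rw [ContinuousLinearMap.sum_apply]
    refine Finset.sum_congr rfl fun β _ => ?_
    rw [ContinuousLinearMap.smul_apply, smul_eq_mul, clm_decomp (B (e β)) w,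
      Finset.mul_sum]
    refine Finset.sum_congr rfl fun α _ => ?_
    have hBe : B (e β) (e α) = pd β (pd α g) (φ x) := (pd_flip hDgx α β).symm
    have hwα : w α = pd i (fun y => φ y α) x := (pd_coord hφx i α).symm
    have hwβ : w β = pd i (fun y => φ y β) x := (pd_coord hφx i β).symm
    rw [hBe, hwα, hwβ]
    ring
  rw [step1, step2, term1, term2]


theorem pd_addF {u v : E m → ℝ} {x : E m} (hu : DifferentiableAt ℝ u x)
    (hv : DifferentiableAt ℝ v x) (i : Fin m) :
    pd i (fun y => u y + v y) x = pd i u x + pd i v x := by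
  unfold pd
  rw [fderiv_fun_add hu hv]
  simp

theorem pd_subF {u v : E m → ℝ} {x : E m} (hu : DifferentiableAt ℝ u x)
    (hv : DifferentiableAt ℝ v x) (i : Fin m) :
    pd i (fun y => u y - v y) x = pd i u x - pd i v x := by
  unfold pd
  rw [fderiv_fun_sub hu hv]
  simp

theorem pd_const_mul {u : E m → ℝ} {x : E m} (hu : DifferentiableAt ℝ u x) (c : ℝ) (i : Fin m) :
    pd i (fun y => c * u y) x = c * pd i u x := by
  unfold pd
  rw [fderiv_const_mul hu]
  simp

theorem ContDiffOn.lap' {f : E m → ℝ} {s : Set (E m)} (hf : ContDiffOn ℝ (⊤ : ℕ∞) f s)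
    (hs : IsOpen s) : ContDiffOn ℝ (⊤ : ℕ∞) (lap f) s := by
  have h : lap f = fun x => ∑ i, pd i (pd i f) x := funext fun x => lap_eq f x
  rw [h]
  exact ContDiffOn.sum fun i _ => (ContDiffOn.pd' (ContDiffOn.pd' hf hs i) hs i)

theorem lap_add {u v : E m → ℝ} {s : Set (E m)} (hs : IsOpen s)
    (hu : ContDiffOn ℝ (⊤ : ℕ∞) u s) (hv : ContDiffOn ℝ (⊤ : ℕ∞) v s) {x : E m} (hx : x ∈ s) :
    lap (fun y => u y + v y) x = lap u x + lap v x := by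
  rw [lap_eq, lap_eq, lap_eq, ← Finset.sum_add_distrib]
  refine Finset.sum_congr rfl fun i _ => ?_
  have h1 : pd i (fun y => u y + v y) =ᶠ[nhds x] fun y => pd i u y + pd i v y := by
    filter_upwards [hs.mem_nhds hx] with y hy
    exact pd_addF (diffAt hu hs hy) (diffAt hv hs hy) i
  rw [pd_congr h1 i]
  exact pd_addF (diffAt (ContDiffOn.pd' hu hs i) hs hx)
    (diffAt (ContDiffOn.pd' hv hs i) hs hx) i

theorem lap_sub {u v : E m → ℝ} {s : Set (E m)} (hs : IsOpen s)
    (hu : ContDiffOn ℝ (⊤ : ℕ∞) u s) (hv : ContDiffOn ℝ (⊤ : ℕ∞) v s) {x : E m} (hx : x ∈ s) :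
    lap (fun y => u y - v y) x = lap u x - lap v x := by
  rw [lap_eq, lap_eq, lap_eq, ← Finset.sum_sub_distrib]
  refine Finset.sum_congr rfl fun i _ => ?_
  have h1 : pd i (fun y => u y - v y) =ᶠ[nhds x] fun y => pd i u y - pd i v y := by
    filter_upwards [hs.mem_nhds hx] with y hy
    exact pd_subF (diffAt hu hs hy) (diffAt hv hs hy) i
  rw [pd_congr h1 i]
  exact pd_subF (diffAt (ContDiffOn.pd' hu hs i) hs hx)
    (diffAt (ContDiffOn.pd' hv hs i) hs hx) i

theorem lap_const_mul {u : E m → ℝ} {s : Set (E m)} (hs : IsOpen s)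
    (hu : ContDiffOn ℝ (⊤ : ℕ∞) u s) {x : E m} (hx : x ∈ s) (c : ℝ) :
    lap (fun y => c * u y) x = c * lap u x := by
  rw [lap_eq, lap_eq, Finset.mul_sum]
  refine Finset.sum_congr rfl fun i _ => ?_
  have h1 : pd i (fun y => c * u y) =ᶠ[nhds x] fun y => c * pd i u y := by
    filter_upwards [hs.mem_nhds hx] with y hy
    exact pd_const_mul (diffAt hu hs hy) c i
  rw [pd_congr h1 i]
  exact pd_const_mul (diffAt (ContDiffOn.pd' hu hs i) hs hx) c i

theorem lap_mul {u v : E m → ℝ} {s : Set (E m)} (hs : IsOpen s)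
    (hu : ContDiffOn ℝ (⊤ : ℕ∞) u s) (hv : ContDiffOn ℝ (⊤ : ℕ∞) v s) {x : E m} (hx : x ∈ s) :
    lap (fun y => u y * v y) x
      = u x * lap v x + v x * lap u x + 2 * ∑ i, pd i u x * pd i v x := by
  rw [lap_eq, lap_eq, lap_eq]
  have key : ∀ i : Fin m, pd i (pd i (fun y => u y * v y)) x
      = pd i (pd i u) x * v x + u x * pd i (pd i v) x + 2 * (pd i u x * pd i v x) := by
    intro i
    have h1 : pd i (fun y => u y * v y) =ᶠ[nhds x]
        fun y => pd i u y * v y + u y * pd i v y := by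
      filter_upwards [hs.mem_nhds hx] with y hy
      exact pd_mul (diffAt hu hs hy) (diffAt hv hs hy) i
    rw [pd_congr h1 i]
    have hud : DifferentiableAt ℝ u x := diffAt hu hs hx
    have hvd : DifferentiableAt ℝ v x := diffAt hv hs hx
    have hpu : DifferentiableAt ℝ (pd i u) x := diffAt (ContDiffOn.pd' hu hs i) hs hx
    have hpv : DifferentiableAt ℝ (pd i v) x := diffAt (ContDiffOn.pd' hv hs i) hs hx
    rw [pd_addF (u := fun y => pd i u y * v y) (v := fun y => u y * pd i v y)
      (hpu.mul hvd) (hud.mul hpv) i, pd_mul hpu hvd i, pd_mul hud hpv i]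
    ring
  rw [Finset.sum_congr rfl fun i _ => key i]
  rw [Finset.sum_add_distrib, Finset.sum_add_distrib, ← Finset.mul_sum, ← Finset.sum_mul,
    ← Finset.mul_sum]
  ring

theorem lap_sum {ι : Type*} (A : Finset ι) {F : ι → E m → ℝ} {s : Set (E m)} (hs : IsOpen s)
    (hF : ∀ a ∈ A, ContDiffOn ℝ (⊤ : ℕ∞) (F a) s) {x : E m} (hx : x ∈ s) :
    lap (fun y => ∑ a ∈ A, F a y) x = ∑ a ∈ A, lap (F a) x := by
  rw [lap_eq]
  have key : ∀ i : Fin m, pd i (pd i (fun y => ∑ a ∈ A, F a y)) x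
      = ∑ a ∈ A, pd i (pd i (F a)) x := by
    intro i
    have h1 : pd i (fun y => ∑ a ∈ A, F a y) =ᶠ[nhds x] fun y => ∑ a ∈ A, pd i (F a) y := by
      filter_upwards [hs.mem_nhds hx] with y hy
      exact pd_sum A (fun a ha => diffAt (hF a ha) hs hy) i
    rw [pd_congr h1 i]
    exact pd_sum A (fun a ha => diffAt (ContDiffOn.pd' (hF a ha) hs i) hs hx) i
  rw [Finset.sum_congr rfl fun i _ => key i, Finset.sum_comm]
  exact Finset.sum_congr rfl fun a _ => (lap_eq (F a) x).symm

theorem lap_comp {s : Set (E m)} (hs : IsOpen s) {t : Set (E n)} (ht : IsOpen t)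
    {φ : E m → E n} (hφ : ContDiffOn ℝ (⊤ : ℕ∞) φ s) (hst : Set.MapsTo φ s t)
    {g : E n → ℝ} (hg : ContDiffOn ℝ (⊤ : ℕ∞) g t) {x : E m} (hx : x ∈ s) :
    lap (fun y => g (φ y)) x =
      (∑ α, pd α g (φ x) * lap (fun y => φ y α) x) +
      ∑ β, ∑ α, pd β (pd α g) (φ x) *
        (∑ i, pd i (fun y => φ y β) x * pd i (fun y => φ y α) x) := by
  rw [lap_eq]
  rw [Finset.sum_congr rfl fun i _ => pd_pd_comp hs ht hφ hst hg hx i]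
  rw [Finset.sum_add_distrib, Finset.sum_comm]
  congr 1
  · refine Finset.sum_congr rfl fun α _ => ?_
    rw [← Finset.mul_sum, lap_eq]
  · rw [Finset.sum_comm]
    refine Finset.sum_congr rfl fun β _ => ?_
    rw [Finset.sum_comm]
    refine Finset.sum_congr rfl fun α _ => ?_
    rw [← Finset.mul_sum]

theorem harmonic_pd_lap {t : Set (E n)} (ht : IsOpen t) {f : E n → ℝ}
    (hf : ContDiffOn ℝ (⊤ : ℕ∞) f t) (hh : ∀ z ∈ t, lap f z = 0) {z : E n} (hz : z ∈ t) (α : Fin n) :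
    ∑ β, pd β (pd β (pd α f)) z = 0 := by
  have h1 : ∀ β : Fin n, pd β (pd β (pd α f)) z = pd α (pd β (pd β f)) z := by
    intro β
    have e1 : ∀ w ∈ t, pd β (pd α f) w = pd α (pd β f) w := fun w hw =>
      pd_symm (hf.contDiffAt (ht.mem_nhds hw)) α β
    calc pd β (pd β (pd α f)) z = pd β (pd α (pd β f)) z := by
          refine pd_congr ?_ β
          filter_upwards [ht.mem_nhds hz] with w hw using e1 w hw
      _ = pd α (pd β (pd β f)) z :=
          pd_symm ((ContDiffOn.pd' hf ht β).contDiffAt (ht.mem_nhds hz)) α β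
  rw [Finset.sum_congr rfl fun β _ => h1 β]
  have h2 : ∑ β, pd α (pd β (pd β f)) z = pd α (fun w => ∑ β, pd β (pd β f) w) z :=
    (pd_sum Finset.univ (fun β _ =>
      diffAt (ContDiffOn.pd' (ContDiffOn.pd' hf ht β) ht β) ht hz) α).symm
  rw [h2]
  have h3 : (fun w => ∑ β, pd β (pd β f) w) =ᶠ[nhds z] fun _ => (0 : ℝ) := by
    filter_upwards [ht.mem_nhds hz] with w hw
    rw [← lap_eq]
    exact hh w hw
  rw [pd_congr h3 α]
  unfold pd
  rw [fderiv_fun_const]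
  simp

theorem lap_comp_conformal {s : Set (E m)} (hs : IsOpen s) {t : Set (E n)} (ht : IsOpen t)
    {φ : E m → E n} (hφ : ContDiffOn ℝ (⊤ : ℕ∞) φ s) (hst : Set.MapsTo φ s t)
    {g : E n → ℝ} (hg : ContDiffOn ℝ (⊤ : ℕ∞) g t) {x : E m} (hx : x ∈ s)
    (hoff : ∀ β γ : Fin n, β ≠ γ →
      (∑ i, pd i (fun y => φ y β) x * pd i (fun y => φ y γ) x) = 0)
    {c : ℝ} (hdiag : ∀ β : Fin n, (∑ i, pd i (fun y => φ y β) x * pd i (fun y => φ y β) x) = c)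
    (hg0 : ∑ β, pd β (pd β g) (φ x) = 0) :
    lap (fun y => g (φ y)) x = ∑ α, pd α g (φ x) * lap (fun y => φ y α) x := by
  rw [lap_comp hs ht hφ hst hg hx]
  have h2 : ∀ β : Fin n, ∑ α, pd β (pd α g) (φ x) *
      (∑ i, pd i (fun y => φ y β) x * pd i (fun y => φ y α) x)
      = pd β (pd β g) (φ x) * c := by
    intro β
    rw [Finset.sum_eq_single β]
    · rw [hdiag β]
    · intro α _ hαβ
      rw [hoff β α (Ne.symm hαβ), mul_zero]
    · intro h
      exact absurd (Finset.mem_univ β) h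
  rw [Finset.sum_congr rfl fun β _ => h2 β, ← Finset.sum_mul, hg0, zero_mul, add_zero]

theorem final_alg {n : ℕ} (H G : Fin n → Fin n → ℝ) (L : Fin n → ℝ)
    (hH : ∀ a b, H a b = H b a)
    (hKoff : ∀ a b, a ≠ b → L a * L b + G a b + G b a = 0)
    (hKdiag : ∀ a b, L a * L a + G a a + G a a = L b * L b + G b b + G b b)
    (hHtrace : ∑ a, H a a = 0) :
    ∑ α, ∑ β, H β α * (L α * L β + 2 * G β α) = 0 := by
  classical
  have swap : ∑ α, ∑ β, H β α * G β α = ∑ α, ∑ β, H β α * G α β := by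
    rw [Finset.sum_comm]
    exact Finset.sum_congr rfl fun a _ => Finset.sum_congr rfl fun b _ => by rw [hH a b]
  have split : ∑ α, ∑ β, H β α * (L α * L β + 2 * G β α)
      = (∑ α, ∑ β, H β α * (L α * L β + G β α)) + ∑ α, ∑ β, H β α * G β α := by
    rw [← Finset.sum_add_distrib]
    refine Finset.sum_congr rfl fun a _ => ?_
    rw [← Finset.sum_add_distrib]
    exact Finset.sum_congr rfl fun b _ => by ring
  rw [split, swap]
  have merge : (∑ α, ∑ β, H β α * (L α * L β + G β α)) + ∑ α, ∑ β, H β α * G α β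
      = ∑ α, ∑ β, H β α * (L α * L β + G α β + G β α) := by
    rw [← Finset.sum_add_distrib]
    refine Finset.sum_congr rfl fun a _ => ?_
    rw [← Finset.sum_add_distrib]
    exact Finset.sum_congr rfl fun b _ => by ring
  rw [merge]
  have diagonly : ∑ α, ∑ β, H β α * (L α * L β + G α β + G β α)
      = ∑ α, H α α * (L α * L α + G α α + G α α) := by
    refine Finset.sum_congr rfl fun a _ => ?_
    rw [Finset.sum_eq_single a]
    · intro b _ hba
      rw [hKoff a b (Ne.symm hba), mul_zero]
    · intro h
      exact absurd (Finset.mem_univ a) h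
  rw [diagonly]
  rcases isEmpty_or_nonempty (Fin n) with hemp | hne
  · simp
  · obtain ⟨a0⟩ := hne
    have hK : ∀ a : Fin n, L a * L a + G a a + G a a = L a0 * L a0 + G a0 a0 + G a0 a0 :=
      fun a => hKdiag a a0
    calc ∑ α, H α α * (L α * L α + G α α + G α α)
        = ∑ α, H α α * (L a0 * L a0 + G a0 a0 + G a0 a0) :=
          Finset.sum_congr rfl fun a _ => by rw [hK a]
      _ = (∑ α, H α α) * (L a0 * L a0 + G a0 a0 + G a0 a0) := by rw [Finset.sum_mul]
      _ = 0 := by rw [hHtrace, zero_mul]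

end Aux

open Aux

/-- if a smooth map `φ : U → ℝⁿ` is horizontally weakly conformal, every
component is biharmonic on `U`, and for all `α ≠ β` the functions `φ^α · φ^β` and
`(φ^α)² − (φ^β)²` are biharmonic on `U`, then `φ` is a generalized harmonic morphism:
it pulls back every harmonic function on an open `V ⊆ ℝⁿ` to a biharmonic function on
`φ⁻¹(V)`. -/
theorem stmt_4 {m n : ℕ} (U : Set (E m)) (hU : IsOpen U)
    (φ : E m → E n) (hφ : ContDiffOn ℝ (⊤ : ℕ∞) φ U)
    (ha : IsHWC φ U)
    (hb : ∀ α : Fin n, ∀ x ∈ U, lap (lap (fun y => φ y α)) x = 0)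
    (hc : ∀ α β : Fin n, α ≠ β →
      (∀ x ∈ U, lap (lap (fun y => φ y α * φ y β)) x = 0) ∧
      (∀ x ∈ U, lap (lap (fun y => (φ y α) ^ 2 - (φ y β) ^ 2)) x = 0)) :
    IsGHM φ U := by
  intro V hV f hf
  obtain ⟨lam, _, hlam⟩ := ha
  have hWopen : IsOpen (U ∩ φ ⁻¹' V) := hφ.continuousOn.isOpen_inter_preimage hU hV
  have hφW : ContDiffOn ℝ (⊤ : ℕ∞) φ (U ∩ φ ⁻¹' V) := hφ.mono Set.inter_subset_left
  have hmap : Set.MapsTo φ (U ∩ φ ⁻¹' V) V := fun y hy => hy.2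
  have hPc : ∀ a : Fin n, ContDiffOn ℝ (⊤ : ℕ∞) (fun y => φ y a) U :=
    fun a => (EuclideanSpace.proj a (𝕜 := ℝ)).contDiff.comp_contDiffOn hφ
  have hPW : ∀ a : Fin n, ContDiffOn ℝ (⊤ : ℕ∞) (fun y => φ y a) (U ∩ φ ⁻¹' V) :=
    fun a => (hPc a).mono Set.inter_subset_left
  have hLc : ∀ a : Fin n, ContDiffOn ℝ (⊤ : ℕ∞) (lap (fun y => φ y a)) U :=
    fun a => ContDiffOn.lap' (hPc a) hU
  -- the conformality relation in pd form
  have hΓ : ∀ y ∈ U, ∀ a b : Fin n,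
      (∑ i, pd i (fun z => φ z a) y * pd i (fun z => φ z b) y)
        = (lam y) ^ 2 * (if a = b then 1 else 0) := by
    intro y hy a b
    rw [← inner_gradient]
    exact hlam y hy a b
  have hoff : ∀ y ∈ U, ∀ a b : Fin n, a ≠ b →
      (∑ i, pd i (fun z => φ z a) y * pd i (fun z => φ z b) y) = 0 := by
    intro y hy a b hab
    rw [hΓ y hy a b, if_neg hab, mul_zero]
  have hdiag : ∀ y ∈ U, ∀ a : Fin n,
      (∑ i, pd i (fun z => φ z a) y * pd i (fun z => φ z a) y) = (lam y) ^ 2 := by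
    intro y hy a
    rw [hΓ y hy a a, if_pos rfl, mul_one]
  constructor
  · exact hf.1.comp hφW hmap
  intro x hx
  -- first Laplacian identity on W
  have key1 : ∀ y ∈ U ∩ φ ⁻¹' V, lap (fun z => f (φ z)) y
      = ∑ α, pd α f (φ y) * lap (fun z => φ z α) y := by
    intro y hy
    refine lap_comp_conformal hWopen hV hφW hmap hf.1 hy
      (fun a b hab => hoff y hy.1 a b hab) (fun a => hdiag y hy.1 a) ?_
    rw [← lap_eq]
    exact hf.2 (φ y) hy.2
  have step2 : lap (lap (f ∘ φ)) x
      = lap (fun y => ∑ α, pd α f (φ y) * lap (fun z => φ z α) y) x :=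
    lap_congr (eventuallyEq_of_open hWopen hx (fun y hy => key1 y hy))
  have hterm_smooth : ∀ α : Fin n,
      ContDiffOn ℝ (⊤ : ℕ∞) (fun y => pd α f (φ y) * lap (fun z => φ z α) y) (U ∩ φ ⁻¹' V) := by
    intro α
    exact ((ContDiffOn.pd' hf.1 hV α).comp hφW hmap).mul
      ((hLc α).mono Set.inter_subset_left)
  have step3 : lap (fun y => ∑ α, pd α f (φ y) * lap (fun z => φ z α) y) x
      = ∑ α, lap (fun y => pd α f (φ y) * lap (fun z => φ z α) y) x :=
    lap_sum Finset.univ hWopen (fun α _ => hterm_smooth α) hx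
    -- expand each summand
  have step45 : ∀ α : Fin n,
      lap (fun y => pd α f (φ y) * lap (fun z => φ z α) y) x
        = ∑ β, pd β (pd α f) (φ x) *
            (lap (fun z => φ z α) x * lap (fun z => φ z β) x +
              2 * ∑ i, pd i (fun z => φ z β) x * pd i (lap (fun z => φ z α)) x) := by
    intro α
    have hu : ContDiffOn ℝ (⊤ : ℕ∞) (fun y => pd α f (φ y)) (U ∩ φ ⁻¹' V) :=
      (ContDiffOn.pd' hf.1 hV α).comp hφW hmap
    have hv : ContDiffOn ℝ (⊤ : ℕ∞) (lap (fun z => φ z α)) (U ∩ φ ⁻¹' V) :=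
      (hLc α).mono Set.inter_subset_left
    rw [lap_mul hWopen hu hv hx]
    have hlapv : lap (lap (fun z => φ z α)) x = 0 := hb α x hx.1
    have hlapu : lap (fun y => pd α f (φ y)) x
        = ∑ β, pd β (pd α f) (φ x) * lap (fun z => φ z β) x :=
      lap_comp_conformal hWopen hV hφW hmap (ContDiffOn.pd' hf.1 hV α) hx
        (fun a b hab => hoff x hx.1 a b hab) (fun a => hdiag x hx.1 a)
        (harmonic_pd_lap hV hf.1 hf.2 hx.2 α)
    have hpdu : ∀ i : Fin m, pd i (fun y => pd α f (φ y)) x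
        = ∑ β, pd β (pd α f) (φ x) * pd i (fun z => φ z β) x :=
      fun i => pd_comp hWopen hV hφW hmap (ContDiffOn.pd' hf.1 hV α) hx i
    rw [hlapv, hlapu, mul_zero, zero_add]
    have e2 : ∑ i, pd i (fun y => pd α f (φ y)) x * pd i (lap (fun z => φ z α)) x
        = ∑ β, pd β (pd α f) (φ x) *
            ∑ i, pd i (fun z => φ z β) x * pd i (lap (fun z => φ z α)) x := by
      have e1 : ∀ i : Fin m, pd i (fun y => pd α f (φ y)) x * pd i (lap (fun z => φ z α)) x
          = ∑ β, pd β (pd α f) (φ x) *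
              (pd i (fun z => φ z β) x * pd i (lap (fun z => φ z α)) x) := by
        intro i
        rw [hpdu i, Finset.sum_mul]
        exact Finset.sum_congr rfl fun b _ => by ring
      rw [Finset.sum_congr rfl fun i _ => e1 i, Finset.sum_comm]
      exact Finset.sum_congr rfl fun b _ => by rw [Finset.mul_sum]
    rw [e2]
    rw [Finset.mul_sum, Finset.mul_sum, ← Finset.sum_add_distrib]
    exact Finset.sum_congr rfl fun b _ => by ring
  -- the two biharmonicity consequences
  have hKoff : ∀ a b : Fin n, a ≠ b →
      lap (fun z => φ z a) x * lap (fun z => φ z b) x +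
        (∑ i, pd i (fun z => φ z a) x * pd i (lap (fun z => φ z b)) x) +
        (∑ i, pd i (fun z => φ z b) x * pd i (lap (fun z => φ z a)) x) = 0 := by
    intro a b hab
    have h0 := (hc a b hab).1 x hx.1
    have ev : ∀ y ∈ U, lap (fun y => φ y a * φ y b) y
        = φ y a * lap (fun z => φ z b) y + φ y b * lap (fun z => φ z a) y := by
      intro y hy
      rw [lap_mul hU (hPc a) (hPc b) hy, hoff y hy a b hab]
      ring
    rw [lap_congr (eventuallyEq_of_open hU hx.1 ev)] at h0
    rw [lap_add hU ((hPc a).mul (hLc b)) ((hPc b).mul (hLc a)) hx.1] at h0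
    rw [lap_mul hU (hPc a) (hLc b) hx.1, lap_mul hU (hPc b) (hLc a) hx.1] at h0
    rw [hb a x hx.1, hb b x hx.1] at h0
    linarith
  have hKdiag : ∀ a b : Fin n,
      lap (fun z => φ z a) x * lap (fun z => φ z a) x +
        (∑ i, pd i (fun z => φ z a) x * pd i (lap (fun z => φ z a)) x) +
        (∑ i, pd i (fun z => φ z a) x * pd i (lap (fun z => φ z a)) x)
      = lap (fun z => φ z b) x * lap (fun z => φ z b) x +
        (∑ i, pd i (fun z => φ z b) x * pd i (lap (fun z => φ z b)) x) +
        (∑ i, pd i (fun z => φ z b) x * pd i (lap (fun z => φ z b)) x) := by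
    intro a b
    rcases eq_or_ne a b with rfl | hab
    · rfl
    have h0 := (hc a b hab).2 x hx.1
    have hfe : (fun y => φ y a ^ 2 - φ y b ^ 2)
        = (fun y => φ y a * φ y a - φ y b * φ y b) := by
      funext y
      ring
    rw [hfe] at h0
    have ev : ∀ y ∈ U, lap (fun y => φ y a * φ y a - φ y b * φ y b) y
        = 2 * (φ y a * lap (fun z => φ z a) y) - 2 * (φ y b * lap (fun z => φ z b) y) := by
      intro y hy
      rw [lap_sub hU ((hPc a).mul (hPc a)) ((hPc b).mul (hPc b)) hy,
        lap_mul hU (hPc a) (hPc a) hy, lap_mul hU (hPc b) (hPc b) hy,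
        hdiag y hy a, hdiag y hy b]
      ring
    rw [lap_congr (eventuallyEq_of_open hU hx.1 ev)] at h0
    rw [lap_sub hU (contDiffOn_const.mul ((hPc a).mul (hLc a)))
      (contDiffOn_const.mul ((hPc b).mul (hLc b))) hx.1] at h0
    rw [lap_const_mul hU ((hPc a).mul (hLc a)) hx.1 2,
      lap_const_mul hU ((hPc b).mul (hLc b)) hx.1 2] at h0
    rw [lap_mul hU (hPc a) (hLc a) hx.1, lap_mul hU (hPc b) (hLc b) hx.1] at h0
    rw [hb a x hx.1, hb b x hx.1] at h0
    linarith
  have hHsym : ∀ a b : Fin n, pd a (pd b f) (φ x) = pd b (pd a f) (φ x) :=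
    fun a b => pd_symm (hf.1.contDiffAt (hV.mem_nhds hx.2)) b a
  have hHtrace : ∑ a : Fin n, pd a (pd a f) (φ x) = 0 := by
    rw [← lap_eq]
    exact hf.2 (φ x) hx.2
  rw [step2, step3, Finset.sum_congr rfl fun α _ => step45 α]
  exact final_alg (fun b a => pd b (pd a f) (φ x))
    (fun b a => ∑ i, pd i (fun z => φ z b) x * pd i (lap (fun z => φ z a)) x)
    (fun a => lap (fun z => φ z a) x) hHsym hKoff hKdiag hHtrace
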